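/- Let d ≥ 4 be even. There is a constant C₀ > 0 independent of q such that for every power q of an odd prime and every subset F ⊂ C, ‖F ∗ M̂‖_{L^∞(F_q^d, dx)} ≤ C₀ |F| / q^d, i.e., max_{x∈F_q^d} |F ∗ M̂(x)| ≤ C₀ |F| q^{−d}. -/

import Mathlib

/-!
By Fourier inversion on `F^d` (valid since `χ` is nontrivial), `M̂ = C - |C| q^{-d}`, a function
with values in `[-1, 1]`. Convolving a function bounded by `1` with the indicator of `S` under
the normalized measure `dx` gives a function bounded by `|S| q^{-d}`.
-/

open Finset MeasureTheory
open scoped ENNReal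

namespace ConeFF

variable (F : Type) [Field F] [Fintype F] [DecidableEq F]

/-- The cone `C = {x ∈ F^d : x₁² + ⋯ + x_{d-2}² = x_{d-1} x_d}` (0-indexed). -/
def cone (d : ℕ) (hd : 3 ≤ d) : Finset (Fin d → F) :=
  Finset.univ.filter fun x =>
    (∑ i ∈ Finset.univ.filter (fun i : Fin d => (i : ℕ) < d - 2), x i ^ 2) =
      x ⟨d - 2, by omega⟩ * x ⟨d - 1, by omega⟩

/-- The quadratic form `Γ(ξ) = ξ₁² + ⋯ + ξ_{d-2}² − 4 ξ_{d-1} ξ_d`. -/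
def gammaForm (d : ℕ) (hd : 3 ≤ d) (ξ : Fin d → F) : F :=
  (∑ i ∈ Finset.univ.filter (fun i : Fin d => (i : ℕ) < d - 2), ξ i ^ 2) -
    4 * ξ ⟨d - 2, by omega⟩ * ξ ⟨d - 1, by omega⟩

/-- Indicator function of a finite set, with values in `ℂ`. -/
def ind {V : Type} [DecidableEq V] (E : Finset V) : V → ℂ :=
  fun x => if x ∈ E then 1 else 0

/-- Convolution with respect to the normalized counting measure `dx`. -/
noncomputable def conv (d : ℕ) (f g : (Fin d → F) → ℂ) : (Fin d → F) → ℂ :=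
  fun y => ((Fintype.card F : ℂ) ^ d)⁻¹ * ∑ x, f (y - x) * g x

/-- The averaging operator `f ∗ σ` over the cone. -/
noncomputable def avg (d : ℕ) (hd : 3 ≤ d) (f : (Fin d → F) → ℂ) : (Fin d → F) → ℂ :=
  fun y => ((cone F d hd).card : ℂ)⁻¹ * ∑ x ∈ cone F d hd, f (y - x)

/-- Inverse Fourier transform `f^∨(m) = q^{-d} ∑_x χ(m·x) f(x)`. -/
noncomputable def invFT (d : ℕ) (χ : AddChar F ℂ) (f : (Fin d → F) → ℂ)
    (m : Fin d → F) : ℂ :=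
  ((Fintype.card F : ℂ) ^ d)⁻¹ * ∑ x, χ (dotProduct m x) * f x

/-- Fourier transform `ĝ(x) = ∑_m χ(−m·x) g(m)` on the dual space. -/
noncomputable def ft (d : ℕ) (χ : AddChar F ℂ) (g : (Fin d → F) → ℂ)
    (x : Fin d → F) : ℂ :=
  ∑ m, χ (-(dotProduct m x)) * g m

/-- `σ^∨(m) = |C|⁻¹ ∑_{x∈C} χ(m·x)`. -/
noncomputable def sigmaInv (d : ℕ) (hd : 3 ≤ d) (χ : AddChar F ℂ) (m : Fin d → F) : ℂ :=
  ((cone F d hd).card : ℂ)⁻¹ * ∑ x ∈ cone F d hd, χ (dotProduct m x)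

/-- `K(m) = σ^∨(m) − δ₀(m)`. -/
noncomputable def Kfun (d : ℕ) (hd : 3 ≤ d) (χ : AddChar F ℂ) (m : Fin d → F) : ℂ :=
  sigmaInv F d hd χ m - if m = 0 then 1 else 0

/-- `M(m) = C^∨(m) − (|C|/q^d) δ₀(m)`. -/
noncomputable def Mfun (d : ℕ) (hd : 3 ≤ d) (χ : AddChar F ℂ) (m : Fin d → F) : ℂ :=
  invFT F d χ (ind (cone F d hd)) m -
    if m = 0 then ((cone F d hd).card : ℂ) / (Fintype.card F : ℂ) ^ d else 0

/-- `L^p(C,σ)` norm (for finite `p`), with `σ` the normalized surface measure. -/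
noncomputable def coneLpNorm (d : ℕ) (hd : 3 ≤ d) (p : ℝ) (h : (Fin d → F) → ℂ) : ℝ :=
  (((cone F d hd).card : ℝ)⁻¹ * ∑ x ∈ cone F d hd, ‖h x‖ ^ p) ^ (1 / p)

/-- `L^p(F_q^d, dx)` norm (for finite `p`), with `dx` the normalized counting measure. -/
noncomputable def spaceLpNorm (d : ℕ) (p : ℝ) (f : (Fin d → F) → ℂ) : ℝ :=
  (((Fintype.card F : ℝ) ^ d)⁻¹ * ∑ x, ‖f x‖ ^ p) ^ (1 / p)

variable {F}

lemma card_cone_le (d : ℕ) (hd : 3 ≤ d) : (cone F d hd).card ≤ Fintype.card F ^ d := by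
  simpa [Fintype.card_fun] using Finset.card_le_univ (cone F d hd)

lemma norm_ind_sub_le_one {V : Type} [DecidableEq V] (E : Finset V) (x : V) {c : ℝ}
    (hc₀ : 0 ≤ c) (hc₁ : c ≤ 1) : ‖ind E x - c‖ ≤ 1 := by
  unfold ind
  split_ifs
  · rw [← Complex.ofReal_one, ← Complex.ofReal_sub, Complex.norm_real, Real.norm_eq_abs,
      abs_le]
    constructor <;> linarith
  · rw [zero_sub, norm_neg, Complex.norm_real, Real.norm_eq_abs, abs_le]
    constructor <;> linarith

lemma sum_addChar_dotProduct {d : ℕ} {χ : AddChar F ℂ} (hχ : χ ≠ 1) (v : Fin d → F) :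
    ∑ m : Fin d → F, χ (m ⬝ᵥ v) = if v = 0 then (Fintype.card F : ℂ) ^ d else 0 := by
  split_ifs with hv
  · simp [hv]
  obtain ⟨i, hi⟩ : ∃ i, v i ≠ 0 := Function.ne_iff.mp hv
  obtain ⟨a, ha⟩ := AddChar.ne_one_iff.mp hχ
  let ψ : AddChar (Fin d → F) ℂ :=
    χ.compAddMonoidHom (AddMonoidHom.mk' (· ⬝ᵥ v) fun m n => add_dotProduct m n v)
  have hψ : ψ ≠ 1 := AddChar.ne_one_iff.mpr
    ⟨Pi.single i (a / v i), by simpa [ψ, single_dotProduct, div_mul_cancel₀ _ hi] using ha⟩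
  exact AddChar.sum_eq_zero_of_ne_one hψ

lemma ft_invFT {d : ℕ} {χ : AddChar F ℂ} (hχ : χ ≠ 1) (f : (Fin d → F) → ℂ)
    (x : Fin d → F) : ft F d χ (invFT F d χ f) x = f x := by
  have hshift : ∀ m y : Fin d → F,
      χ (-(m ⬝ᵥ x)) * χ (m ⬝ᵥ y) = χ (m ⬝ᵥ (y - x)) := fun m y => by
    rw [← AddChar.map_add_eq_mul, dotProduct_sub, neg_add_eq_sub]
  calc ft F d χ (invFT F d χ f) x
      = ((Fintype.card F : ℂ) ^ d)⁻¹ * ∑ y, f y * ∑ m : Fin d → F, χ (m ⬝ᵥ (y - x)) := by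
        simp only [ft, invFT, Finset.mul_sum, ← hshift]
        rw [Finset.sum_comm]
        exact Finset.sum_congr rfl fun _ _ => Finset.sum_congr rfl fun _ _ => by ring
    _ = f x := by
        simp only [sum_addChar_dotProduct hχ, sub_eq_zero, mul_ite, mul_zero,
          Finset.sum_ite_eq', Finset.mem_univ, if_true]
        field_simp

lemma ft_ite_zero_eq_const (d : ℕ) (χ : AddChar F ℂ) (c : ℂ) (x : Fin d → F) :
    ft F d χ (fun m => if m = 0 then c else 0) x = c := by
  simp [ft]

lemma ft_Mfun {d : ℕ} (hd : 3 ≤ d) {χ : AddChar F ℂ} (hχ : χ ≠ 1) (x : Fin d → F) :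
    ft F d χ (Mfun F d hd χ) x =
      ind (cone F d hd) x - ((cone F d hd).card : ℂ) / (Fintype.card F : ℂ) ^ d := by
  rw [← ft_invFT hχ (ind (cone F d hd)) x,
    ← ft_ite_zero_eq_const d χ (((cone F d hd).card : ℂ) / (Fintype.card F : ℂ) ^ d) x]
  simp only [ft, Mfun, mul_sub, Finset.sum_sub_distrib]

lemma norm_ft_Mfun_le_one {d : ℕ} (hd : 3 ≤ d) {χ : AddChar F ℂ} (hχ : χ ≠ 1)
    (x : Fin d → F) : ‖ft F d χ (Mfun F d hd χ) x‖ ≤ 1 := by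
  have hq : (0 : ℝ) < (Fintype.card F : ℝ) ^ d := by positivity
  have hcard : ((cone F d hd).card : ℝ) ≤ (Fintype.card F : ℝ) ^ d := by
    exact_mod_cast card_cone_le d hd
  rw [ft_Mfun hd hχ]
  have := norm_ind_sub_le_one (cone F d hd) x (by positivity) ((div_le_one hq).mpr hcard)
  push_cast at this
  exact this

lemma norm_conv_ind_le {d : ℕ} (S : Finset (Fin d → F)) {g : (Fin d → F) → ℂ} {B : ℝ}
    (hg : ∀ y, ‖g y‖ ≤ B) (x : Fin d → F) :
    ‖conv F d (ind S) g x‖ ≤ B * S.card / (Fintype.card F : ℝ) ^ d := by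
  have hsum : ∑ y, ind S (x - y) * g y = ∑ z ∈ S, g (x - z) := by
    rw [← Fintype.sum_equiv (Equiv.subLeft x) (fun z => ind S z * g (x - z)) _
      fun z => by simp]
    simp [ind, Finset.sum_ite_mem]
  calc ‖conv F d (ind S) g x‖
      = ‖∑ z ∈ S, g (x - z)‖ / (Fintype.card F : ℝ) ^ d := by
        simp [conv, hsum, div_eq_inv_mul]
    _ ≤ B * S.card / (Fintype.card F : ℝ) ^ d := by
        gcongr
        simpa [mul_comm] using norm_sum_le_of_le S fun z _ => hg (x - z)

/-- `‖F ∗ M̂‖_{L^∞(F_q^d,dx)} ≲ |F| q^{-d}` for `F ⊆ C` and even `d ≥ 4`. -/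
theorem statement13 (d : ℕ) (hd : 4 ≤ d) :
    ∃ C₀ : ℝ, 0 < C₀ ∧
      ∀ (F : Type) [Field F] [Fintype F] [DecidableEq F], ringChar F ≠ 2 →
        ∀ χ : AddChar F ℂ, (∃ a, χ a ≠ 1) →
          ∀ S : Finset (Fin d → F), S ⊆ cone F d (by omega) →
            ∀ x : Fin d → F,
              ‖conv F d (ind S) (ft F d χ (Mfun F d (by omega) χ)) x‖ ≤
                C₀ * (S.card : ℝ) / (Fintype.card F : ℝ) ^ d := by
  refine ⟨1, one_pos, fun F _ _ _ _ χ hχ S _ x => ?_⟩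
  exact norm_conv_ind_le S (norm_ft_Mfun_le_one _ (AddChar.ne_one_iff.mpr hχ)) x

end ConeFF
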